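/- arXiv:1602.05330 — 2 statements merged into one kernel-verified Lean document; each statement's English description precedes it below -/
import Mathlib

section
/- Let m : A → [0,∞) be null-additive and monotone and A ∈ A an atom of m. If f : T → X is m-totally-measurable on A, then f is Gould m-integrable on A. -/
open Set ENNReal

variable {T : Type*}

/-- `𝒜` is an algebra of subsets of `T`. -/
def IsSetAlgebra' (𝒜 : Set (Set T)) : Prop :=
  ∅ ∈ 𝒜 ∧ (∀ A ∈ 𝒜, Aᶜ ∈ 𝒜) ∧ ∀ A ∈ 𝒜, ∀ B ∈ 𝒜, A ∪ B ∈ 𝒜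

/-- `m` is monotone on `𝒜`. -/
def MonoSF (m : Set T → ℝ) (𝒜 : Set (Set T)) : Prop :=
  ∀ A ∈ 𝒜, ∀ B ∈ 𝒜, A ⊆ B → m A ≤ m B

/-- `m` is subadditive on `𝒜`. -/
def SubaddSF (m : Set T → ℝ) (𝒜 : Set (Set T)) : Prop :=
  ∀ A ∈ 𝒜, ∀ B ∈ 𝒜, m (A ∪ B) ≤ m A + m B

/-- `m` is null-additive on `𝒜`. -/
def NullAddSF (m : Set T → ℝ) (𝒜 : Set (Set T)) : Prop :=
  ∀ A ∈ 𝒜, ∀ B ∈ 𝒜, m B = 0 → m (A ∪ B) = m A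

/-- `m` is finitely additive on `𝒜`. -/
def FinAddSF (m : Set T → ℝ) (𝒜 : Set (Set T)) : Prop :=
  ∀ A ∈ 𝒜, ∀ B ∈ 𝒜, Disjoint A B → m (A ∪ B) = m A + m B

/-- The variation `m̄` of `m`: supremum of `Σᵢ m(Aᵢ)` over finite pairwise disjoint
families `{Aᵢ} ⊆ 𝒜` with each `Aᵢ ⊆ E`. -/
noncomputable def variationSF (m : Set T → ℝ) (𝒜 : Set (Set T)) (E : Set T) : ℝ≥0∞ :=
  ⨆ F ∈ {F : Finset (Set T) |
      (∀ A ∈ F, A ∈ 𝒜 ∧ A ⊆ E) ∧ (F : Set (Set T)).PairwiseDisjoint id},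
    ∑ A ∈ F, ENNReal.ofReal (m A)

/-- `A` is an atom of `m`. -/
def IsAtomOf (m : Set T → ℝ) (𝒜 : Set (Set T)) (A : Set T) : Prop :=
  A ∈ 𝒜 ∧ 0 < m A ∧ ∀ B ∈ 𝒜, B ⊆ A → m B = 0 ∨ m (A \ B) = 0

/-- A partition of `A` into nonvoid pairwise disjoint members of `𝒜`. -/
def IsPartitionOf (𝒜 : Set (Set T)) (A : Set T) (P : Finset (Set T)) : Prop :=
  (∀ B ∈ P, B ∈ 𝒜 ∧ B.Nonempty ∧ B ⊆ A) ∧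
  (P : Set (Set T)).PairwiseDisjoint id ∧ ⋃₀ (P : Set (Set T)) = A

/-- `Q` is finer than `P`. -/
def RefinesPart (P Q : Finset (Set T)) : Prop := ∀ B ∈ Q, ∃ C ∈ P, B ⊆ C

/-- `f` is `m`-totally-measurable on `B`. -/
def TotallyMeasurableOn {X : Type*} [NormedAddCommGroup X] (m : Set T → ℝ)
    (𝒜 : Set (Set T)) (f : T → X) (B : Set T) : Prop :=
  ∀ ε > 0, ∃ A₀ : Set T, ∃ F : Finset (Set T),
    A₀ ∈ 𝒜 ∧ A₀ ⊆ B ∧ (∀ C ∈ F, C ∈ 𝒜 ∧ C.Nonempty ∧ C ⊆ B) ∧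
    (insert A₀ (F : Set (Set T))).PairwiseDisjoint id ∧
    A₀ ∪ ⋃₀ (F : Set (Set T)) = B ∧
    variationSF m 𝒜 A₀ < ENNReal.ofReal ε ∧
    ∀ C ∈ F, ∀ t ∈ C, ∀ s ∈ C, ‖f t - f s‖ < ε

variable {X : Type*} [NormedAddCommGroup X] [NormedSpace ℝ X]

/-- `f` has Gould integral `α` on `A` w.r.t. `m`: the net of Riemann sums
`σ(P) = Σ_{B ∈ P} m(B) • f(t_B)` over tagged partitions of `A`, ordered by
refinement, converges to `α`. -/
def HasGouldIntegralOn (m : Set T → ℝ) (𝒜 : Set (Set T)) (f : T → X) (A : Set T)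
    (α : X) : Prop :=
  ∀ ε > 0, ∃ P₀, IsPartitionOf 𝒜 A P₀ ∧ ∀ P, IsPartitionOf 𝒜 A P → RefinesPart P₀ P →
    ∀ τ : Set T → T, (∀ B ∈ P, τ B ∈ B) →
      ‖(∑ B ∈ P, m B • f (τ B)) - α‖ < ε

/-- `f` is Gould `m`-integrable on `A`. -/
def GouldIntegrableOn (m : Set T → ℝ) (𝒜 : Set (Set T)) (f : T → X) (A : Set T) : Prop :=
  ∃ α, HasGouldIntegralOn m 𝒜 f A α

/-!
On an atom `A`, every partition of `A` has exactly one conull cell (its complement in `A` is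
null) and all other cells are null, so every Riemann sum reduces to `m A • f t` with `t` a tag
in that cell. Conull subsets of `A` are closed under intersection and nonempty, so they form a
filter base on `T`, and total measurability makes `f` Cauchy along this filter.
Its limit `L` gives the integral `m A • L`: once a partition has only conull cells of
oscillation `< δ`, every refinement puts the tag of its conull cell in such a cell.
-/

open Filter Topology

namespace IsSetAlgebra'

variable {𝒜 : Set (Set T)}

lemma inter_mem (h𝒜 : IsSetAlgebra' 𝒜) {A B : Set T} (hA : A ∈ 𝒜) (hB : B ∈ 𝒜) :
    A ∩ B ∈ 𝒜 := by
  simpa using h𝒜.2.1 _ (h𝒜.2.2 _ (h𝒜.2.1 A hA) _ (h𝒜.2.1 B hB))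

lemma diff_mem (h𝒜 : IsSetAlgebra' 𝒜) {A B : Set T} (hA : A ∈ 𝒜) (hB : B ∈ 𝒜) :
    A \ B ∈ 𝒜 :=
  h𝒜.inter_mem hA (h𝒜.2.1 B hB)

end IsSetAlgebra'

section

variable {𝒜 : Set (Set T)} {m : Set T → ℝ}

lemma NullAddSF.sUnion_mem_and_measure_eq_zero (hnull : NullAddSF m 𝒜)
    (h𝒜 : IsSetAlgebra' 𝒜) (h0 : m ∅ = 0) {S : Finset (Set T)}
    (hS : ∀ B ∈ S, B ∈ 𝒜 ∧ m B = 0) :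
    ⋃₀ (S : Set (Set T)) ∈ 𝒜 ∧ m (⋃₀ (S : Set (Set T))) = 0 := by
  classical
  induction S using Finset.induction_on with
  | empty => simpa using ⟨h𝒜.1, h0⟩
  | insert B S _ ih =>
    obtain ⟨hB𝒜, hB0⟩ := hS B (Finset.mem_insert_self B S)
    obtain ⟨hU𝒜, hU0⟩ := ih fun C hC => hS C (Finset.mem_insert_of_mem hC)
    rw [Finset.coe_insert, sUnion_insert]
    exact ⟨h𝒜.2.2 B hB𝒜 _ hU𝒜, (hnull B hB𝒜 _ hU𝒜 hU0).trans hB0⟩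

lemma ofReal_le_variationSF {E : Set T} (hE : E ∈ 𝒜) :
    ENNReal.ofReal (m E) ≤ variationSF m 𝒜 E := by
  classical
  refine le_iSup₂_of_le (f := fun F (_ : F ∈ {F : Finset (Set T) |
    (∀ A ∈ F, A ∈ 𝒜 ∧ A ⊆ E) ∧ (F : Set (Set T)).PairwiseDisjoint id}) =>
      ∑ A ∈ F, ENNReal.ofReal (m A)) {E} ⟨by simpa using hE, by simp⟩ (by simp)

end

def IsConullSubset (m : Set T → ℝ) (𝒜 : Set (Set T)) (A B : Set T) : Prop :=
  B ∈ 𝒜 ∧ B ⊆ A ∧ m (A \ B) = 0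

namespace IsConullSubset

variable {𝒜 : Set (Set T)} {m : Set T → ℝ} {A B C : Set T}

lemma refl (hA : A ∈ 𝒜) (h0 : m ∅ = 0) : IsConullSubset m 𝒜 A A := by
  simpa [IsConullSubset] using ⟨hA, h0⟩

lemma measure_eq (h𝒜 : IsSetAlgebra' 𝒜) (hnull : NullAddSF m 𝒜) (hA : A ∈ 𝒜)
    (hB : IsConullSubset m 𝒜 A B) : m B = m A := by
  have := hnull B hB.1 _ (h𝒜.diff_mem hA hB.1) hB.2.2
  rwa [union_sdiff_cancel hB.2.1, eq_comm] at this

lemma nonempty (h𝒜 : IsSetAlgebra' 𝒜) (h0 : m ∅ = 0) (hnull : NullAddSF m 𝒜)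
    (hA : A ∈ 𝒜) (hApos : 0 < m A) (hB : IsConullSubset m 𝒜 A B) : B.Nonempty := by
  rw [nonempty_iff_ne_empty]
  rintro rfl
  linarith [hB.measure_eq h𝒜 hnull hA]

lemma inter (h𝒜 : IsSetAlgebra' 𝒜) (hnull : NullAddSF m 𝒜) (hA : A ∈ 𝒜)
    (hB : IsConullSubset m 𝒜 A B) (hC : IsConullSubset m 𝒜 A C) :
    IsConullSubset m 𝒜 A (B ∩ C) := by
  refine ⟨h𝒜.inter_mem hB.1 hC.1, inter_subset_left.trans hB.2.1, ?_⟩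
  rw [sdiff_inter, hnull _ (h𝒜.diff_mem hA hB.1) _ (h𝒜.diff_mem hA hC.1) hC.2.2, hB.2.2]

lemma mono (h𝒜 : IsSetAlgebra' 𝒜) (hpos : ∀ A ∈ 𝒜, 0 ≤ m A) (hmono : MonoSF m 𝒜)
    (hA : A ∈ 𝒜) (hB : IsConullSubset m 𝒜 A B) (hBC : B ⊆ C) (hC : C ∈ 𝒜) (hCA : C ⊆ A) :
    IsConullSubset m 𝒜 A C := by
  refine ⟨hC, hCA, le_antisymm ?_ (hpos _ (h𝒜.diff_mem hA hC))⟩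
  calc m (A \ C) ≤ m (A \ B) :=
        hmono _ (h𝒜.diff_mem hA hC) _ (h𝒜.diff_mem hA hB.1) (sdiff_subset_sdiff_right hBC)
    _ = 0 := hB.2.2

end IsConullSubset

section Partition

variable {𝒜 : Set (Set T)} {m : Set T → ℝ} {A : Set T}

lemma IsAtomOf.exists_isConullSubset_of_isPartitionOf (hA : IsAtomOf m 𝒜 A)
    (h𝒜 : IsSetAlgebra' 𝒜) (h0 : m ∅ = 0) (hpos : ∀ A ∈ 𝒜, 0 ≤ m A)
    (hnull : NullAddSF m 𝒜) (hmono : MonoSF m 𝒜) {P : Finset (Set T)}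
    (hP : IsPartitionOf 𝒜 A P) :
    ∃ B ∈ P, IsConullSubset m 𝒜 A B ∧ ∀ C ∈ P, C ≠ B → m C = 0 := by
  obtain ⟨hA𝒜, hApos, hatom⟩ := hA
  obtain ⟨hcells, hdisj, hcover⟩ := hP
  obtain ⟨B, hBP, hB0⟩ : ∃ B ∈ P, m B ≠ 0 := by
    by_contra! hnull_all
    have := (hnull.sUnion_mem_and_measure_eq_zero h𝒜 h0
      fun B hB => ⟨(hcells B hB).1, hnull_all B hB⟩).2
    rw [hcover] at this
    linarith
  obtain ⟨hB𝒜, -, hBA⟩ := hcells B hBP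
  have hB : IsConullSubset m 𝒜 A B := ⟨hB𝒜, hBA, (hatom B hB𝒜 hBA).resolve_left hB0⟩
  refine ⟨B, hBP, hB, fun C hCP hCB => le_antisymm ?_ (hpos C (hcells C hCP).1)⟩
  have hCAB : C ⊆ A \ B :=
    subset_sdiff.2 ⟨(hcells C hCP).2.2, hdisj (Finset.mem_coe.2 hCP) (Finset.mem_coe.2 hBP) hCB⟩
  calc m C ≤ m (A \ B) := hmono C (hcells C hCP).1 _ (h𝒜.diff_mem hA𝒜 hB𝒜) hCAB
    _ = 0 := hB.2.2

lemma IsAtomOf.exists_isConullSubset_riemannSum_eq {X : Type*} [NormedAddCommGroup X]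
    [Module ℝ X] (hA : IsAtomOf m 𝒜 A) (h𝒜 : IsSetAlgebra' 𝒜) (h0 : m ∅ = 0)
    (hpos : ∀ A ∈ 𝒜, 0 ≤ m A) (hnull : NullAddSF m 𝒜) (hmono : MonoSF m 𝒜)
    {P : Finset (Set T)} (hP : IsPartitionOf 𝒜 A P) :
    ∃ B ∈ P, IsConullSubset m 𝒜 A B ∧
      ∀ (f : T → X) (τ : Set T → T), ∑ C ∈ P, m C • f (τ C) = m A • f (τ B) := by
  obtain ⟨B, hBP, hB, hnull_other⟩ :=
    hA.exists_isConullSubset_of_isPartitionOf h𝒜 h0 hpos hnull hmono hP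
  refine ⟨B, hBP, hB, fun f τ => ?_⟩
  rw [Finset.sum_eq_single_of_mem B hBP fun C hCP hCB => by rw [hnull_other C hCP hCB, zero_smul],
    hB.measure_eq h𝒜 hnull hA.1]

open scoped Classical in
lemma isPartitionOf_filter_nonempty {S : Finset (Set T)} (hS : ∀ B ∈ S, B ∈ 𝒜 ∧ B ⊆ A)
    (hdisj : (S : Set (Set T)).PairwiseDisjoint id) (hcover : ⋃₀ (S : Set (Set T)) = A) :
    IsPartitionOf 𝒜 A (S.filter Set.Nonempty) := by
  refine ⟨fun B hB => ?_, hdisj.subset (Finset.coe_subset.2 (Finset.filter_subset _ S)), ?_⟩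
  · rw [Finset.mem_filter] at hB
    exact ⟨(hS B hB.1).1, hB.2, (hS B hB.1).2⟩
  · rw [← hcover]
    ext x
    simp only [Finset.coe_filter, mem_sUnion, mem_ofPred_eq]
    exact ⟨fun ⟨B, hB, hx⟩ => ⟨B, hB.1, hx⟩, fun ⟨B, hB, hx⟩ => ⟨B, ⟨hB, x, hx⟩, hx⟩⟩

lemma TotallyMeasurableOn.exists_isPartitionOf_osc_lt {X : Type*} [NormedAddCommGroup X]
    {f : T → X} (hf : TotallyMeasurableOn m 𝒜 f A) (h𝒜 : IsSetAlgebra' 𝒜)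
    (hnull : NullAddSF m 𝒜) (hA : A ∈ 𝒜) (hApos : 0 < m A) {δ : ℝ} (hδ : 0 < δ) :
    ∃ P, IsPartitionOf 𝒜 A P ∧ ∀ C ∈ P, IsConullSubset m 𝒜 A C →
      ∀ s ∈ C, ∀ t ∈ C, ‖f s - f t‖ < δ := by
  classical
  -- Below level `m A` the exceptional set `A₀` cannot be conull.
  obtain ⟨A₀, F, hA₀, hA₀A, hF, hdisj, hcover, hvar, hosc⟩ := hf _ (lt_min hδ hApos)
  have hA₀small : m A₀ < min δ (m A) :=
    (ENNReal.ofReal_lt_ofReal_iff (lt_min hδ hApos)).1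
      ((ofReal_le_variationSF hA₀).trans_lt hvar)
  have hS : ∀ B ∈ insert A₀ F, B ∈ 𝒜 ∧ B ⊆ A := by
    simp only [Finset.forall_mem_insert]
    exact ⟨⟨hA₀, hA₀A⟩, fun C hC => ⟨(hF C hC).1, (hF C hC).2.2⟩⟩
  refine ⟨_, isPartitionOf_filter_nonempty hS (by rwa [Finset.coe_insert])
    (by rwa [Finset.coe_insert, sUnion_insert]), fun C hCP hC => ?_⟩
  rcases Finset.mem_insert.1 (Finset.mem_filter.1 hCP).1 with rfl | hCF
  · linarith [hC.measure_eq h𝒜 hnull hA, min_le_right δ (m A)]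
  · exact fun s hs t ht => (hosc C hCF s hs t ht).trans_le (min_le_left _ _)

end Partition

def conullFilter (m : Set T → ℝ) (𝒜 : Set (Set T)) (A : Set T) : Filter T :=
  ⨅ B ∈ {B | IsConullSubset m 𝒜 A B}, 𝓟 B

section ConullFilter

variable {𝒜 : Set (Set T)} {m : Set T → ℝ} {A : Set T}

lemma hasBasis_conullFilter (h𝒜 : IsSetAlgebra' 𝒜) (h0 : m ∅ = 0) (hnull : NullAddSF m 𝒜)
    (hA : A ∈ 𝒜) : (conullFilter m 𝒜 A).HasBasis (IsConullSubset m 𝒜 A) id :=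
  hasBasis_biInf_principal
    (fun B hB C hC => ⟨B ∩ C, hB.inter h𝒜 hnull hA hC, inter_subset_left, inter_subset_right⟩)
    ⟨A, .refl hA h0⟩

lemma neBot_conullFilter (h𝒜 : IsSetAlgebra' 𝒜) (h0 : m ∅ = 0) (hnull : NullAddSF m 𝒜)
    (hA : A ∈ 𝒜) (hApos : 0 < m A) : (conullFilter m 𝒜 A).NeBot :=
  (hasBasis_conullFilter h𝒜 h0 hnull hA).neBot_iff.2 fun hB => hB.nonempty h𝒜 h0 hnull hA hApos

lemma TotallyMeasurableOn.exists_tendsto_conullFilter {X : Type*} [NormedAddCommGroup X]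
    [CompleteSpace X] {f : T → X} (hf : TotallyMeasurableOn m 𝒜 f A) (hA : IsAtomOf m 𝒜 A)
    (h𝒜 : IsSetAlgebra' 𝒜) (h0 : m ∅ = 0) (hpos : ∀ A ∈ 𝒜, 0 ≤ m A)
    (hnull : NullAddSF m 𝒜) (hmono : MonoSF m 𝒜) :
    ∃ L, Tendsto f (conullFilter m 𝒜 A) (𝓝 L) := by
  have hbasis := hasBasis_conullFilter h𝒜 h0 hnull hA.1
  have := neBot_conullFilter h𝒜 h0 hnull hA.1 hA.2.1
  refine cauchy_map_iff_exists_tendsto.1 (Metric.cauchy_iff.2 ⟨inferInstance, fun ε hε => ?_⟩)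
  obtain ⟨P, hP, hosc⟩ := hf.exists_isPartitionOf_osc_lt h𝒜 hnull hA.1 hA.2.1 hε
  obtain ⟨B, hBP, hB, -⟩ := hA.exists_isConullSubset_of_isPartitionOf h𝒜 h0 hpos hnull hmono hP
  refine ⟨f '' B, image_mem_map (hbasis.mem_of_mem hB), ?_⟩
  rintro - ⟨s, hs, rfl⟩ - ⟨t, ht, rfl⟩
  rw [dist_eq_norm]
  exact hosc B hBP hB s hs t ht

end ConullFilter

lemma norm_sub_le_of_tendsto {ι E : Type*} [SeminormedAddCommGroup E] {l : Filter ι} [l.NeBot]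
    {g : ι → E} {L x : E} (hg : Tendsto g l (𝓝 L)) {C : Set ι} (hC : C ∈ l) {ε : ℝ}
    (h : ∀ i ∈ C, ‖x - g i‖ ≤ ε) : ‖x - L‖ ≤ ε :=
  le_of_tendsto (tendsto_const_nhds.sub hg).norm (eventually_of_mem hC h)

/-- If `m` is null-additive and monotone and `A` is an atom, total measurability of
`f` on `A` implies Gould integrability of `f` on `A`. -/
theorem gould_integrable_on_atom_of_totallyMeasurable [CompleteSpace X]
    (𝒜 : Set (Set T)) (m : Set T → ℝ)
    (halg : IsSetAlgebra' 𝒜) (h0 : m ∅ = 0) (hpos : ∀ A ∈ 𝒜, 0 ≤ m A)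
    (hnull : NullAddSF m 𝒜) (hmono : MonoSF m 𝒜)
    (A : Set T) (hA : IsAtomOf m 𝒜 A) (f : T → X)
    (hmeas : TotallyMeasurableOn m 𝒜 f A) :
    GouldIntegrableOn m 𝒜 f A := by
  obtain ⟨L, hL⟩ := hmeas.exists_tendsto_conullFilter hA halg h0 hpos hnull hmono
  have := neBot_conullFilter halg h0 hnull hA.1 hA.2.1
  refine ⟨m A • L, fun ε hε => ?_⟩
  have hApos := hA.2.1
  have hδ : 0 < ε / (2 * m A) := by positivity
  obtain ⟨P₀, hP₀, hosc⟩ := hmeas.exists_isPartitionOf_osc_lt halg hnull hA.1 hApos hδ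
  refine ⟨P₀, hP₀, fun P hP hrefine τ hτ => ?_⟩
  obtain ⟨B, hBP, hB, hsum⟩ :=
    hA.exists_isConullSubset_riemannSum_eq (X := X) halg h0 hpos hnull hmono hP
  obtain ⟨C, hCP₀, hBC⟩ := hrefine B hBP
  have hC := hB.mono halg hpos hmono hA.1 hBC (hP₀.1 C hCP₀).1 (hP₀.1 C hCP₀).2.2
  have hτL : ‖f (τ B) - L‖ ≤ ε / (2 * m A) :=
    norm_sub_le_of_tendsto hL ((hasBasis_conullFilter halg h0 hnull hA.1).mem_of_mem hC)
      fun s hs => (hosc C hCP₀ hC _ (hBC (hτ B hBP)) s hs).le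
  rw [hsum f τ, ← smul_sub, norm_smul, Real.norm_of_nonneg hApos.le]
  calc m A * ‖f (τ B) - L‖ ≤ m A * (ε / (2 * m A)) := by gcongr
    _ = ε / 2 := by field_simp
    _ < ε := half_lt_self hε
end

section
/- Let m : A → [0,∞) be null-additive and monotone and A ∈ A an atom of m with m(A) = 1. If f : T → X is Gould m-integrable on A, then ∫_A f dm = x·m(A), where x is the unique element of X lying in ∩_{U} closure(f(U)), the intersection taken over all atoms U ⊆ A of m. -/
open Set ENNReal

variable {T : Type*}

variable {X : Type*} [NormedAddCommGroup X] [NormedSpace ℝ X]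

section AuxGould

variable {𝒜 : Set (Set T)} {m : Set T → ℝ}

lemma IsSetAlgebra'.inter_mem' (halg : IsSetAlgebra' 𝒜) {A B : Set T}
    (hA : A ∈ 𝒜) (hB : B ∈ 𝒜) : A ∩ B ∈ 𝒜 := by
  have h := halg.2.1 _ (halg.2.2 _ (halg.2.1 _ hA) _ (halg.2.1 _ hB))
  simpa [Set.compl_union, compl_compl] using h

lemma IsSetAlgebra'.diff_mem' (halg : IsSetAlgebra' 𝒜) {A B : Set T}
    (hA : A ∈ 𝒜) (hB : B ∈ 𝒜) : A \ B ∈ 𝒜 := by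
  have h := halg.inter_mem' hA (halg.2.1 _ hB)
  simpa [Set.diff_eq] using h

lemma sUnion_null_aux (halg : IsSetAlgebra' 𝒜) (h0 : m ∅ = 0) (hnull : NullAddSF m 𝒜)
    (F : Finset (Set T)) (hmem : ∀ B ∈ F, B ∈ 𝒜) (hz : ∀ B ∈ F, m B = 0) :
    ⋃₀ (F : Set (Set T)) ∈ 𝒜 ∧ m (⋃₀ (F : Set (Set T))) = 0 := by
  classical
  induction F using Finset.induction_on with
  | empty => simpa using ⟨halg.1, h0⟩
  | @insert B F hBF ih =>
    have hmem' : ∀ C ∈ F, C ∈ 𝒜 := fun C hC => hmem C (Finset.mem_insert_of_mem hC)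
    have hz' : ∀ C ∈ F, m C = 0 := fun C hC => hz C (Finset.mem_insert_of_mem hC)
    obtain ⟨hS𝒜, hS0⟩ := ih hmem' hz'
    have hB𝒜 : B ∈ 𝒜 := hmem B (Finset.mem_insert_self _ _)
    have hBz : m B = 0 := hz B (Finset.mem_insert_self _ _)
    constructor
    · simpa [Set.sUnion_insert] using halg.2.2 _ hB𝒜 _ hS𝒜
    · have h := hnull _ hS𝒜 _ hB𝒜 hBz
      rw [Finset.coe_insert, Set.sUnion_insert, Set.union_comm, h, hS0]

lemma partition_big_aux (halg : IsSetAlgebra' 𝒜) (h0 : m ∅ = 0)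
    (hpos : ∀ A ∈ 𝒜, 0 ≤ m A) (hnull : NullAddSF m 𝒜) (hmono : MonoSF m 𝒜)
    {A : Set T} (hA : IsAtomOf m 𝒜 A) {P : Finset (Set T)}
    (hP : IsPartitionOf 𝒜 A P) :
    ∃ B ∈ P, m B = m A ∧ ∀ C ∈ P, C ≠ B → m C = 0 := by
  obtain ⟨hA𝒜, hApos, hAatom⟩ := hA
  obtain ⟨hPmem, hPdisj, hPun⟩ := hP
  have hexists : ∃ B ∈ P, m (A \ B) = 0 := by
    by_contra h
    push_neg at h
    have hz : ∀ B ∈ P, m B = 0 := by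
      intro B hB
      rcases hAatom B (hPmem B hB).1 (hPmem B hB).2.2 with h' | h'
      · exact h'
      · exact absurd h' (h B hB)
    have hres := sUnion_null_aux halg h0 hnull P (fun B hB => (hPmem B hB).1) hz
    rw [hPun] at hres
    linarith [hres.2]
  obtain ⟨B, hB, hABz⟩ := hexists
  have hB𝒜 := (hPmem B hB).1
  have hBA := (hPmem B hB).2.2
  have hmB : m B = m A := by
    have h := hnull B hB𝒜 (A \ B) (halg.diff_mem' hA𝒜 hB𝒜) hABz
    rw [Set.union_diff_cancel hBA] at h
    exact h.symm
  refine ⟨B, hB, hmB, fun C hC hne => ?_⟩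
  have hdisj : Disjoint C B := hPdisj (Finset.mem_coe.mpr hC) (Finset.mem_coe.mpr hB) hne
  have hCsub : C ⊆ A \ B := fun x hx =>
    ⟨(hPmem C hC).2.2 hx, fun hxB => (Set.disjoint_left.mp hdisj hx) hxB⟩
  have h1 : m C ≤ m (A \ B) :=
    hmono C (hPmem C hC).1 (A \ B) (halg.diff_mem' hA𝒜 hB𝒜) hCsub
  have h2 : 0 ≤ m C := hpos C (hPmem C hC).1
  linarith

lemma subatom_aux (halg : IsSetAlgebra' 𝒜) (hpos : ∀ A ∈ 𝒜, 0 ≤ m A)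
    (hmono : MonoSF m 𝒜) {A B : Set T} (hA : IsAtomOf m 𝒜 A)
    (hB𝒜 : B ∈ 𝒜) (hBA : B ⊆ A) (hBpos : 0 < m B) : IsAtomOf m 𝒜 B := by
  refine ⟨hB𝒜, hBpos, fun C hC𝒜 hCB => ?_⟩
  rcases hA.2.2 C hC𝒜 (hCB.trans hBA) with h | h
  · exact Or.inl h
  · right
    have hsub : B \ C ⊆ A \ C := Set.diff_subset_diff_left hBA
    have h1 : m (B \ C) ≤ m (A \ C) :=
      hmono _ (halg.diff_mem' hB𝒜 hC𝒜) _ (halg.diff_mem' hA.1 hC𝒜) hsub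
    have h2 : 0 ≤ m (B \ C) := hpos _ (halg.diff_mem' hB𝒜 hC𝒜)
    linarith

lemma sum_collapse_aux {X : Type*} [NormedAddCommGroup X] [NormedSpace ℝ X]
    (m : Set T → ℝ) (f : T → X) {P : Finset (Set T)} {B : Set T} (hB : B ∈ P)
    (hz : ∀ C ∈ P, C ≠ B → m C = 0) (τ : Set T → T) :
    (∑ C ∈ P, m C • f (τ C)) = m B • f (τ B) :=
  Finset.sum_eq_single_of_mem B hB (fun C hC hne => by rw [hz C hC hne, zero_smul])

end AuxGould

/-- The Gould integral of an integrable `f` on an atom `A` with `m(A) = 1` is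
`x·m(A)`, where `x` is the unique point of `⋂_{U atom ⊆ A} closure (f(U))`. -/
theorem gould_integral_value_on_atom [CompleteSpace X]
    (𝒜 : Set (Set T)) (m : Set T → ℝ)
    (halg : IsSetAlgebra' 𝒜) (h0 : m ∅ = 0) (hpos : ∀ A ∈ 𝒜, 0 ≤ m A)
    (hnull : NullAddSF m 𝒜) (hmono : MonoSF m 𝒜)
    (A : Set T) (hA : IsAtomOf m 𝒜 A) (hA1 : m A = 1) (f : T → X)
    (hint : GouldIntegrableOn m 𝒜 f A) :
    ∃ x : X, (⋂ U ∈ {U : Set T | IsAtomOf m 𝒜 U ∧ U ⊆ A}, closure (f '' U)) = {x} ∧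
      HasGouldIntegralOn m 𝒜 f A (m A • x) := by
  classical
  obtain ⟨α, hα⟩ := hint
  have hApos : 0 < m A := hA.2.1
  have hAne : A.Nonempty := by
    rcases Set.eq_empty_or_nonempty A with h | h
    · rw [h, h0] at hA1; norm_num at hA1
    · exact h
  obtain ⟨t₀, ht₀⟩ := hAne
  -- Key 1 : for every ε>0 and every atom U ⊆ A there is t ∈ U with ‖f t - α‖ < ε
  have key1 : ∀ ε > (0:ℝ), ∀ U : Set T, IsAtomOf m 𝒜 U → U ⊆ A →
      ∃ t ∈ U, ‖f t - α‖ < ε := by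
    intro ε hε U hU hUA
    obtain ⟨P₀, hP₀, hP₀prop⟩ := hα ε hε
    have hU𝒜 := hU.1
    have hAU0 : m (A \ U) = 0 := by
      rcases hA.2.2 U hU𝒜 hUA with h | h
      · linarith [hU.2.1]
      · exact h
    set P : Finset (Set T) :=
      (P₀.image (fun B => B ∩ U) ∪ P₀.image (fun B => B \ U)).filter
        (fun C => C.Nonempty) with hPdef
    have hPmem : ∀ D, D ∈ P ↔ D.Nonempty ∧ ∃ B ∈ P₀, D = B ∩ U ∨ D = B \ U := by
      intro D
      constructor
      · intro hD
        rw [hPdef, Finset.mem_filter] at hD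
        refine ⟨hD.2, ?_⟩
        rcases Finset.mem_union.mp hD.1 with h | h
        · obtain ⟨B, hB, rfl⟩ := Finset.mem_image.mp h
          exact ⟨B, hB, Or.inl rfl⟩
        · obtain ⟨B, hB, rfl⟩ := Finset.mem_image.mp h
          exact ⟨B, hB, Or.inr rfl⟩
      · rintro ⟨hne, B, hB, rfl | rfl⟩
        · exact Finset.mem_filter.mpr
            ⟨Finset.mem_union_left _ (Finset.mem_image_of_mem _ hB), hne⟩
        · exact Finset.mem_filter.mpr
            ⟨Finset.mem_union_right _ (Finset.mem_image_of_mem _ hB), hne⟩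
    have hP : IsPartitionOf 𝒜 A P := by
      refine ⟨?_, ?_, ?_⟩
      · intro D hD
        obtain ⟨hne, B, hB, hform⟩ := (hPmem D).mp hD
        have hB𝒜 := (hP₀.1 B hB).1
        have hBA := (hP₀.1 B hB).2.2
        rcases hform with rfl | rfl
        · exact ⟨halg.inter_mem' hB𝒜 hU𝒜, hne, Set.inter_subset_left.trans hBA⟩
        · exact ⟨halg.diff_mem' hB𝒜 hU𝒜, hne, Set.diff_subset.trans hBA⟩
      · intro D hD E hE hne
        obtain ⟨_, B, hB, hDform⟩ := (hPmem D).mp (Finset.mem_coe.mp hD)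
        obtain ⟨_, C, hC, hEform⟩ := (hPmem E).mp (Finset.mem_coe.mp hE)
        by_cases hBC : B = C
        · subst hBC
          rcases hDform with rfl | rfl <;> rcases hEform with rfl | rfl
          · exact absurd rfl hne
          · exact Set.disjoint_left.mpr (fun x hx hx' => hx'.2 hx.2)
          · exact Set.disjoint_left.mpr (fun x hx hx' => hx.2 hx'.2)
          · exact absurd rfl hne
        · have hd : Disjoint B C :=
            hP₀.2.1 (Finset.mem_coe.mpr hB) (Finset.mem_coe.mpr hC) hBC
          rcases hDform with rfl | rfl <;> rcases hEform with rfl | rfl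
          · exact hd.mono Set.inter_subset_left Set.inter_subset_left
          · exact hd.mono Set.inter_subset_left Set.diff_subset
          · exact hd.mono Set.diff_subset Set.inter_subset_left
          · exact hd.mono Set.diff_subset Set.diff_subset
      · ext x
        simp only [Set.mem_sUnion, Finset.mem_coe]
        constructor
        · rintro ⟨D, hD, hxD⟩
          obtain ⟨_, B, hB, hform⟩ := (hPmem D).mp hD
          have hBA := (hP₀.1 B hB).2.2
          rcases hform with rfl | rfl
          · exact hBA hxD.1
          · exact hBA hxD.1
        · intro hx
          have hx' : x ∈ ⋃₀ (P₀ : Set (Set T)) := by rw [hP₀.2.2]; exact hx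
          obtain ⟨B, hB, hxB⟩ := hx'
          by_cases hxU : x ∈ U
          · exact ⟨B ∩ U, (hPmem _).mpr ⟨⟨x, hxB, hxU⟩, B, hB, Or.inl rfl⟩,
              hxB, hxU⟩
          · exact ⟨B \ U, (hPmem _).mpr ⟨⟨x, hxB, hxU⟩, B, hB, Or.inr rfl⟩,
              hxB, hxU⟩
    have href : RefinesPart P₀ P := by
      intro D hD
      obtain ⟨_, B, hB, hform⟩ := (hPmem D).mp hD
      rcases hform with rfl | rfl
      · exact ⟨B, hB, Set.inter_subset_left⟩
      · exact ⟨B, hB, Set.diff_subset⟩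
    obtain ⟨C, hCP, hmC, hz⟩ := partition_big_aux halg h0 hpos hnull hmono hA hP
    have hCU : C ⊆ U := by
      obtain ⟨hCne, B, hB, hform⟩ := (hPmem C).mp hCP
      rcases hform with rfl | rfl
      · exact Set.inter_subset_right
      · exfalso
        have hBA := (hP₀.1 B hB).2.2
        have hsub : B \ U ⊆ A \ U := Set.diff_subset_diff_left hBA
        have hC𝒜 : B \ U ∈ 𝒜 := halg.diff_mem' (hP₀.1 B hB).1 hU𝒜
        have hle := hmono _ hC𝒜 _ (halg.diff_mem' hA.1 hU𝒜) hsub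
        rw [hmC, hA1] at hle
        linarith
    set τ : Set T → T := fun D => if h : D.Nonempty then h.choose else t₀ with hτdef
    have hτ : ∀ D ∈ P, τ D ∈ D := by
      intro D hD
      have hDne := ((hPmem D).mp hD).1
      show (if h : D.Nonempty then h.choose else t₀) ∈ D
      rw [dif_pos hDne]
      exact hDne.choose_spec
    have hsum := hP₀prop P hP href τ hτ
    rw [sum_collapse_aux m f hCP hz τ, hmC, hA1, one_smul] at hsum
    exact ⟨τ C, hCU (hτ C hCP), hsum⟩
  -- Key 2 : for every ε>0 there is an atom B ⊆ A with ‖f t - α‖ < ε for all t ∈ B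
  have key2 : ∀ ε > (0:ℝ), ∃ B : Set T, IsAtomOf m 𝒜 B ∧ B ⊆ A ∧
      ∀ t ∈ B, ‖f t - α‖ < ε := by
    intro ε hε
    obtain ⟨P₀, hP₀, hP₀prop⟩ := hα ε hε
    obtain ⟨B, hBP, hmB, hz⟩ := partition_big_aux halg h0 hpos hnull hmono hA hP₀
    have hB𝒜 := (hP₀.1 B hBP).1
    have hBA := (hP₀.1 B hBP).2.2
    have hBpos : 0 < m B := by rw [hmB]; exact hApos
    refine ⟨B, subatom_aux halg hpos hmono hA hB𝒜 hBA hBpos, hBA, fun t ht => ?_⟩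
    set τ₀ : Set T → T := fun C => if h : C.Nonempty then h.choose else t₀ with hτ₀def
    set τ : Set T → T := Function.update τ₀ B t with hτdef
    have hτ : ∀ C ∈ P₀, τ C ∈ C := by
      intro C hC
      by_cases hCB : C = B
      · subst hCB
        rw [hτdef, Function.update_self]
        exact ht
      · rw [hτdef, Function.update_of_ne hCB]
        have hCne := (hP₀.1 C hC).2.1
        show (if h : C.Nonempty then h.choose else t₀) ∈ C
        rw [dif_pos hCne]
        exact hCne.choose_spec
    have href : RefinesPart P₀ P₀ := fun C hC => ⟨C, hC, subset_rfl⟩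
    have hsum := hP₀prop P₀ hP₀ href τ hτ
    rw [sum_collapse_aux m f hBP hz τ, hmB, hA1, one_smul, hτdef,
      Function.update_self] at hsum
    exact hsum
  refine ⟨α, ?_, ?_⟩
  · apply Set.eq_singleton_iff_unique_mem.mpr
    constructor
    · rw [Set.mem_iInter₂]
      rintro U ⟨hUatom, hUA⟩
      rw [Metric.mem_closure_iff]
      intro ε hε
      obtain ⟨t, htU, hlt⟩ := key1 ε hε U hUatom hUA
      exact ⟨f t, Set.mem_image_of_mem f htU,
        by rw [dist_eq_norm, norm_sub_rev]; exact hlt⟩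
    · intro y hy
      rw [Set.mem_iInter₂] at hy
      by_contra hne
      have hd : 0 < ‖y - α‖ := by
        rw [norm_pos_iff, sub_ne_zero]; exact hne
      obtain ⟨B, hBatom, hBA, hball⟩ := key2 (‖y - α‖ / 4) (by linarith)
      have hyB : y ∈ closure (f '' B) := hy B ⟨hBatom, hBA⟩
      rw [Metric.mem_closure_iff] at hyB
      obtain ⟨z, hzmem, hdz⟩ := hyB (‖y - α‖ / 4) (by linarith)
      obtain ⟨t, htB, rfl⟩ := hzmem
      have h1 : ‖f t - α‖ < ‖y - α‖ / 4 := hball t htB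
      have hyft : ‖y - f t‖ < ‖y - α‖ / 4 := by rwa [dist_eq_norm] at hdz
      have htri : ‖y - α‖ ≤ ‖y - f t‖ + ‖f t - α‖ := by
        have h := dist_triangle y (f t) α
        simpa [dist_eq_norm] using h
      linarith
  · rw [hA1, one_smul]
    exact hα
end
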